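/- arXiv:1605.00265 — 4 statements merged into one kernel-verified Lean document; each statement's English description precedes it below -/
import Mathlib

section
/- Let X ⊆ {0,1}^k be a set of rule settings of size p such that the p×p matrix F whose rows are the vectors f(x), x ∈ X, is invertible, and let β ∈ ℝ^p. Then there is a matrix maximizing the determinant over P(β) that lies in the face conv{M(x,β) : x ∈ X} if and only if for every x ∈ {0,1}^k one has λ(x,β) · (F⁻ᵀ f(x))ᵀ ψ(β)⁻¹ (F⁻ᵀ f(x)) ≤ 1, where ψ(β) is the diagonal p×p matrix whose diagonal entries are the intensities λ(x,β), x ∈ X (in the same order as the rows of F). Moreover, if these inequalities hold, then the matrix (1/p) Σ_{x∈X} M(x,β), the geometric center of the face, maximizes the determinant over P(β). -/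
/-!
If `A` is positive definite and `B` positive semidefinite with `tr (A⁻¹ B) ≤ p`, then
`det B ≤ det A`: this is AM–GM for the eigenvalues of `A^{-1/2} B A^{-1/2}`. Conversely,
`det ((1 - t) A + t B) = det A · (1 + t (tr (A⁻¹ B) - p) + O(t²))`, so a maximiser `A` of the
determinant on the convex hull of a set `S` satisfies `tr (A⁻¹ M) ≤ p` for every `M ∈ S`. For
`S = {M(x,β)}` this is the Kiefer–Wolfowitz criterion.

A matrix of the face is `Fᵀ diag (wᵢ λᵢ) F` for weights `w` in the simplex, and for it
`tr (A⁻¹ M(xⱼ,β)) = 1 / wⱼ`. The criterion thus forces `wⱼ ≥ 1/p`, hence `w ≡ 1/p`: only the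
centre of the face can maximise the determinant, and at the centre `tr (A⁻¹ M(x,β))` is `p` times
the left-hand side of the stated inequality.
-/

open Matrix

/-- Index type for the components of the regression function of interaction order `d`:
subsets `S ⊆ {1,…,k}` with `|S| ≤ d`.  Its cardinality is `p = ∑_{i=0}^d binom(k,i)`. -/
abbrev MonIdx (k d : ℕ) := {S : Finset (Fin k) // S.card ≤ d}

/-- The regression function of interaction order `d`: the `S`-component of `f(x)` is the
square-free monomial `∏_{i ∈ S} x_i`, evaluated at the rule setting `x ∈ {0,1}^k`. -/
def regr (k d : ℕ) (x : Fin k → Bool) : MonIdx k d → ℝ :=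
  fun S => ∏ i ∈ S.1, (if x i then (1 : ℝ) else 0)

/-- The intensity `λ(x,β) = exp (f(x)ᵀ β)` of the rule setting `x`. -/
noncomputable def intensity (k d : ℕ) (β : MonIdx k d → ℝ) (x : Fin k → Bool) : ℝ :=
  Real.exp (∑ S, regr k d x S * β S)

/-- The information matrix `M(x,β) = λ(x,β) · f(x) f(x)ᵀ`. -/
noncomputable def infoMat (k d : ℕ) (β : MonIdx k d → ℝ) (x : Fin k → Bool) :
    Matrix (MonIdx k d) (MonIdx k d) ℝ :=
  intensity k d β x • Matrix.vecMulVec (regr k d x) (regr k d x)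

open Set Filter Topology

theorem exists_mem_stdSimplex_of_mem_convexHull_range {𝕜 ι E : Type*} [Semiring 𝕜]
    [PartialOrder 𝕜] [IsOrderedRing 𝕜] [Fintype ι] [AddCommMonoid E] [Module 𝕜 E]
    {z : ι → E} {x : E} (hx : x ∈ convexHull 𝕜 (range z)) :
    ∃ w ∈ stdSimplex 𝕜 ι, ∑ i, w i • z i = x := by
  classical
  have hsub : convexHull 𝕜 (range z) ⊆ Fintype.linearCombination 𝕜 z '' stdSimplex 𝕜 ι :=
    convexHull_min
      (by rintro _ ⟨i, rfl⟩; exact ⟨Pi.single i 1, single_mem_stdSimplex 𝕜 i, by simp⟩)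
      ((convex_stdSimplex 𝕜 ι).linear_image _)
  obtain ⟨w, hw, rfl⟩ := hsub hx
  exact ⟨w, hw, Fintype.linearCombination_apply 𝕜 z w⟩

theorem inv_card_smul_sum_mem_convexHull_range {𝕜 ι E : Type*} [Field 𝕜] [LinearOrder 𝕜]
    [IsStrictOrderedRing 𝕜] [Fintype ι] [Nonempty ι] [AddCommGroup E] [Module 𝕜 E]
    (z : ι → E) : ((Fintype.card ι : 𝕜)⁻¹ • ∑ i, z i) ∈ convexHull 𝕜 (range z) := by
  rw [Finset.smul_sum]
  exact mem_convexHull_of_exists_fintype (fun _ => (Fintype.card ι : 𝕜)⁻¹) z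
    (fun _ => by positivity) (by simp [Fintype.card_ne_zero]) mem_range_self rfl

namespace Matrix

variable {n : Type*} [Fintype n] [DecidableEq n]

theorem PosSemidef.det_le_one_of_trace_le_card {C : Matrix n n ℝ} (hC : C.PosSemidef)
    (h : C.trace ≤ Fintype.card n) : C.det ≤ 1 := by
  set μ := hC.1.eigenvalues
  have htrace : C.trace = ∑ i, μ i := by simpa using hC.1.trace_eq_sum_eigenvalues
  -- AM–GM in the form `x ≤ exp (x - 1)`, applied to each eigenvalue
  calc C.det = ∏ i, μ i := by simpa using hC.1.det_eq_prod_eigenvalues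
    _ ≤ ∏ i, Real.exp (μ i - 1) :=
        Finset.prod_le_prod (fun i _ => hC.eigenvalues_nonneg i)
          fun i _ => by linarith [Real.add_one_le_exp (μ i - 1)]
    _ = Real.exp (C.trace - Fintype.card n) := by
        rw [← Real.exp_sum, Finset.sum_sub_distrib, htrace]; simp
    _ ≤ 1 := Real.exp_le_one_iff.mpr (by linarith)

theorem trace_nonpos_of_det_one_add_smul_le_one {D : Matrix n n ℝ}
    (h : ∀ t ∈ Icc (0 : ℝ) 1, (1 + t • D).det ≤ 1) : D.trace ≤ 0 := by
  set q : ℝ → ℝ := fun t =>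
    ((1 + (Polynomial.X : Polynomial ℝ) • D.map Polynomial.C).det.divX.divX).eval t
  have hlim : Tendsto (fun t => D.trace + q t * t) (𝓝[>] 0) (𝓝 D.trace) := by
    have hcont : Continuous fun t => D.trace + q t * t := by fun_prop
    simpa using (hcont.tendsto 0).mono_left nhdsWithin_le_nhds
  refine le_of_tendsto hlim ?_
  filter_upwards [Ioo_mem_nhdsGT one_pos] with t ht
  have hdet := h t ⟨ht.1.le, ht.2.le⟩
  rw [det_one_add_smul] at hdet
  exact nonpos_of_mul_nonpos_left (by linear_combination hdet) ht.1

theorem PosDef.exists_eq_conjTranspose_mul_self {A : Matrix n n ℝ} (hA : A.PosDef) :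
    ∃ G : Matrix n n ℝ, IsUnit G.det ∧ A = Gᴴ * G := by
  open scoped MatrixOrder in
  have hG : (CFC.sqrt A)ᴴ * CFC.sqrt A = A := by
    rw [← star_eq_conjTranspose, (CFC.sqrt_nonneg A).isSelfAdjoint.star_eq]
    exact CFC.sqrt_mul_sqrt_self A hA.posSemidef.nonneg
  refine ⟨CFC.sqrt A, ?_, hG.symm⟩
  have hdet := congrArg det hG
  rw [det_mul] at hdet
  exact isUnit_of_mul_isUnit_right (hdet ▸ hA.det_pos.ne'.isUnit)

theorem PosDef.det_le_of_trace_inv_mul_le_card {A B : Matrix n n ℝ} (hA : A.PosDef)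
    (hB : B.PosSemidef) (h : (A⁻¹ * B).trace ≤ Fintype.card n) : B.det ≤ A.det := by
  obtain ⟨G, hG, rfl⟩ := hA.exists_eq_conjTranspose_mul_self
  set C := G⁻¹ᴴ * B * G⁻¹
  have hBC : B = Gᴴ * C * G := by
    simp only [C, conjTranspose_nonsing_inv, ← Matrix.mul_assoc,
      mul_nonsing_inv _ (by rwa [det_conjTranspose, star_trivial] : IsUnit Gᴴ.det), Matrix.one_mul]
    rw [Matrix.mul_assoc, nonsing_inv_mul _ hG, Matrix.mul_one]
  have hC : C.det ≤ 1 := by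
    refine (hB.conjTranspose_mul_mul_same G⁻¹).det_le_one_of_trace_le_card ?_
    rwa [trace_mul_cycle, conjTranspose_nonsing_inv, ← Matrix.mul_inv_rev]
  clear_value C
  calc B.det = C.det * (Gᴴ * G).det := by rw [hBC, det_mul, det_mul, det_mul]; ring
    _ ≤ (Gᴴ * G).det := mul_le_of_le_one_left hA.det_pos.le hC

theorem trace_inv_mul_le_card_of_det_segment_le {A B : Matrix n n ℝ} (hA : 0 < A.det)
    (h : ∀ t ∈ Icc (0 : ℝ) 1, ((1 - t) • A + t • B).det ≤ A.det) :
    (A⁻¹ * B).trace ≤ Fintype.card n := by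
  have hsegment : ∀ t : ℝ, (1 - t) • A + t • B = A * (1 + t • (A⁻¹ * B - 1)) := fun t => by
    rw [Matrix.mul_add, Matrix.mul_smul, Matrix.mul_sub, ← Matrix.mul_assoc,
      mul_nonsing_inv _ hA.ne'.isUnit]
    simp only [Matrix.one_mul, Matrix.mul_one, sub_smul, one_smul, smul_sub]
    abel
  have htrace := trace_nonpos_of_det_one_add_smul_le_one fun t ht => by
    have := h t ht
    rwa [hsegment, det_mul, mul_le_iff_le_one_right hA] at this
  rw [trace_sub, trace_one] at htrace
  linarith

theorem trace_inv_mul_le_card_of_isMaxOn_det {S : Set (Matrix n n ℝ)} {A M : Matrix n n ℝ}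
    (hmax : IsMaxOn det (convexHull ℝ S) A) (hA : A ∈ convexHull ℝ S) (hdet : 0 < A.det)
    (hM : M ∈ S) : (A⁻¹ * M).trace ≤ Fintype.card n :=
  trace_inv_mul_le_card_of_det_segment_le hdet fun t ht =>
    isMaxOn_iff.1 hmax _ <| convex_convexHull ℝ S hA (subset_convexHull ℝ S hM)
      (by linarith [ht.2]) ht.1 (by ring)

theorem isMaxOn_det_convexHull_of_trace_inv_mul_le_card {S : Set (Matrix n n ℝ)}
    {A : Matrix n n ℝ} (hS : ∀ M ∈ S, M.PosSemidef) (hA : A.PosDef)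
    (h : ∀ M ∈ S, (A⁻¹ * M).trace ≤ Fintype.card n) : IsMaxOn det (convexHull ℝ S) A := by
  have hconvex :
      Convex ℝ {B : Matrix n n ℝ | B.PosSemidef ∧ (A⁻¹ * B).trace ≤ Fintype.card n} := by
    rintro B₁ ⟨hB₁, htr₁⟩ B₂ ⟨hB₂, htr₂⟩ a b ha hb hab
    refine ⟨(hB₁.smul ha).add (hB₂.smul hb), ?_⟩
    simp only [Matrix.mul_add, Matrix.mul_smul, trace_add, trace_smul, smul_eq_mul]
    nlinarith
  intro B hB
  obtain ⟨hBpsd, hBtr⟩ := convexHull_min (fun M hM => by exact ⟨hS M hM, h M hM⟩) hconvex hB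
  exact hA.det_le_of_trace_inv_mul_le_card hBpsd hBtr

theorem transpose_mul_diagonal_mul_eq_sum {m l R : Type*} [Fintype m] [DecidableEq m]
    [CommSemiring R] (F : Matrix m l R) (w : m → R) :
    Fᵀ * diagonal w * F = ∑ i, w i • vecMulVec (F i) (F i) := by
  ext a b
  simp only [mul_apply, transpose_apply, diagonal_apply, sum_apply, smul_apply, vecMulVec_apply,
    smul_eq_mul, mul_ite, mul_zero, Finset.sum_ite_eq', Finset.mem_univ, if_true]
  exact Finset.sum_congr rfl fun i _ => by ring

theorem inv_transpose_mul_diagonal_mul {K : Type*} [Field K] (F : Matrix n n K) {w : n → K}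
    (hw : ∀ i, w i ≠ 0) : (Fᵀ * diagonal w * F)⁻¹ = F⁻¹ * diagonal w⁻¹ * F⁻¹ᵀ := by
  have hdiag : (diagonal w)⁻¹ = diagonal w⁻¹ :=
    inv_eq_right_inv (by rw [diagonal_mul_diagonal]; simp [hw])
  rw [Matrix.mul_inv_rev, Matrix.mul_inv_rev, hdiag, transpose_nonsing_inv, Matrix.mul_assoc]

theorem trace_inv_transpose_mul_diagonal_mul_mul_vecMulVec {K : Type*} [Field K]
    (F : Matrix n n K) {w : n → K} (hw : ∀ i, w i ≠ 0) (u : n → K) :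
    ((Fᵀ * diagonal w * F)⁻¹ * vecMulVec u u).trace =
      (F⁻¹ᵀ *ᵥ u) ⬝ᵥ (diagonal w⁻¹ *ᵥ (F⁻¹ᵀ *ᵥ u)) := by
  rw [inv_transpose_mul_diagonal_mul F hw, mul_vecMulVec, trace_vecMulVec, dotProduct_comm,
    ← mulVec_mulVec, ← mulVec_mulVec, dotProduct_mulVec, ← mulVec_transpose]

theorem inv_transpose_mulVec_row {K : Type*} [Field K] {F : Matrix n n K} (hF : IsUnit F.det)
    (i : n) : F⁻¹ᵀ *ᵥ F i = Pi.single i 1 := by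
  have hrow : F i = Fᵀ *ᵥ Pi.single i 1 := by ext; simp [mulVec_single]
  rw [hrow, mulVec_mulVec, ← transpose_mul, mul_nonsing_inv _ hF, transpose_one, one_mulVec]

theorem posDef_transpose_mul_diagonal_mul {F : Matrix n n ℝ} (hF : IsUnit F.det) {w : n → ℝ}
    (hw : ∀ i, 0 < w i) : (Fᵀ * diagonal w * F).PosDef := by
  simpa [conjTranspose_eq_transpose_of_trivial] using
    (posDef_diagonal_iff.2 hw).conjTranspose_mul_mul_same
      (mulVec_injective_iff_isUnit.2 ((isUnit_iff_isUnit_det F).2 hF))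

end Matrix

section SaturatedDesign

variable {k d : ℕ} {β : MonIdx k d → ℝ}

instance : Nonempty (MonIdx k d) := ⟨⟨∅, by simp⟩⟩

theorem intensity_pos (x : Fin k → Bool) : 0 < intensity k d β x := Real.exp_pos _

theorem infoMat_posSemidef (x : Fin k → Bool) : (infoMat k d β x).PosSemidef := by
  simpa [infoMat] using
    (posSemidef_vecMulVec_self_star (regr k d x)).smul (intensity_pos (β := β) x).le

variable {e : MonIdx k d → Fin k → Bool} {F : Matrix (MonIdx k d) (MonIdx k d) ℝ}

theorem sum_smul_infoMat_eq (hrow : ∀ i, F i = regr k d (e i)) (v : MonIdx k d → ℝ) :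
    ∑ i, v i • infoMat k d β (e i) =
      Fᵀ * diagonal (fun i => v i * intensity k d β (e i)) * F := by
  rw [transpose_mul_diagonal_mul_eq_sum]
  simp only [infoMat, hrow, smul_smul]

theorem trace_inv_mul_infoMat {w : MonIdx k d → ℝ} (hw : ∀ i, w i ≠ 0) (x : Fin k → Bool) :
    ((Fᵀ * diagonal w * F)⁻¹ * infoMat k d β x).trace =
      intensity k d β x *
        ((F⁻¹ᵀ *ᵥ regr k d x) ⬝ᵥ (diagonal w⁻¹ *ᵥ (F⁻¹ᵀ *ᵥ regr k d x))) := by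
  rw [infoMat, Matrix.mul_smul, trace_smul, smul_eq_mul,
    trace_inv_transpose_mul_diagonal_mul_mul_vecMulVec F hw]

theorem trace_inv_mul_infoMat_row (hrow : ∀ i, F i = regr k d (e i)) (hF : IsUnit F.det)
    {w : MonIdx k d → ℝ} (hw : ∀ i, w i ≠ 0) (j : MonIdx k d) :
    ((Fᵀ * diagonal w * F)⁻¹ * infoMat k d β (e j)).trace = intensity k d β (e j) / w j := by
  rw [trace_inv_mul_infoMat hw, ← hrow, inv_transpose_mulVec_row hF]
  simp [div_eq_mul_inv]

theorem inv_card_smul_sum_infoMat_eq (hrow : ∀ i, F i = regr k d (e i)) :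
    (Fintype.card (MonIdx k d) : ℝ)⁻¹ • ∑ i, infoMat k d β (e i) =
      Fᵀ * diagonal (fun i => (Fintype.card (MonIdx k d) : ℝ)⁻¹ * intensity k d β (e i)) * F := by
  rw [Finset.smul_sum, sum_smul_infoMat_eq hrow]

theorem trace_inv_centroid_mul_infoMat (hrow : ∀ i, F i = regr k d (e i)) (x : Fin k → Bool) :
    (((Fintype.card (MonIdx k d) : ℝ)⁻¹ • ∑ i, infoMat k d β (e i))⁻¹ * infoMat k d β x).trace =
      Fintype.card (MonIdx k d) * (intensity k d β x *
        ((F⁻¹ᵀ *ᵥ regr k d x) ⬝ᵥ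
          (diagonal (fun i => (intensity k d β (e i))⁻¹) *ᵥ (F⁻¹ᵀ *ᵥ regr k d x)))) := by
  have hp : (Fintype.card (MonIdx k d) : ℝ) ≠ 0 := Nat.cast_ne_zero.2 Fintype.card_pos.ne'
  have hweights : (fun i => (Fintype.card (MonIdx k d) : ℝ)⁻¹ * intensity k d β (e i))⁻¹ =
      (Fintype.card (MonIdx k d) : ℝ) • fun i => (intensity k d β (e i))⁻¹ := by
    funext i; simp [mul_comm]
  rw [inv_card_smul_sum_infoMat_eq hrow,
    trace_inv_mul_infoMat fun i => mul_ne_zero (inv_ne_zero hp) (intensity_pos _).ne',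
    hweights, diagonal_smul, smul_mulVec, dotProduct_smul, smul_eq_mul]
  ring

theorem eq_inv_card_of_trace_inv_mul_infoMat_le (hrow : ∀ i, F i = regr k d (e i))
    (hF : IsUnit F.det) {w : MonIdx k d → ℝ} (hw : w ∈ stdSimplex ℝ (MonIdx k d))
    (hdet : 0 < (∑ i, w i • infoMat k d β (e i)).det)
    (htr : ∀ j, ((∑ i, w i • infoMat k d β (e i))⁻¹ * infoMat k d β (e j)).trace ≤
      Fintype.card (MonIdx k d)) :
    w = fun _ => (Fintype.card (MonIdx k d) : ℝ)⁻¹ := by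
  rw [sum_smul_infoMat_eq hrow] at hdet htr
  have hne : ∀ i, w i * intensity k d β (e i) ≠ 0 := by
    rw [det_mul, det_mul, det_diagonal] at hdet
    exact fun i => Finset.prod_ne_zero_iff.1
      (right_ne_zero_of_mul (left_ne_zero_of_mul hdet.ne')) i (Finset.mem_univ _)
  have hle : ∀ j, (Fintype.card (MonIdx k d) : ℝ)⁻¹ ≤ w j := fun j => by
    have hwj : 0 < w j := (hw.1 j).lt_of_ne fun h => hne j (by rw [← h, zero_mul])
    have := htr j
    rw [trace_inv_mul_infoMat_row hrow hF hne, div_mul_cancel_right₀ (intensity_pos _).ne'] at this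
    exact inv_le_of_inv_le₀ hwj this
  have hsum : ∑ _i : MonIdx k d, (Fintype.card (MonIdx k d) : ℝ)⁻¹ = ∑ i, w i := by
    rw [hw.2, Finset.sum_const, Finset.card_univ, nsmul_eq_mul,
      mul_inv_cancel₀ (Nat.cast_ne_zero.2 Fintype.card_pos.ne')]
  funext j
  exact ((Finset.sum_eq_sum_iff_of_le fun i _ => hle i).1 hsum j (Finset.mem_univ j)).symm

end SaturatedDesign

theorem kiefer_wolfowitz_saturated_general (k d : ℕ)
    (β : MonIdx k d → ℝ)
    (e : MonIdx k d → (Fin k → Bool))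
    (F : Matrix (MonIdx k d) (MonIdx k d) ℝ)
    (hF : F = Matrix.of fun i j => regr k d (e i) j)
    (hFunit : IsUnit F.det)
    (ψinv : Matrix (MonIdx k d) (MonIdx k d) ℝ)
    (hψinv : ψinv = Matrix.diagonal fun i => (intensity k d β (e i))⁻¹) :
    ((∃ A ∈ convexHull ℝ (Set.range fun i => infoMat k d β (e i)),
        ∀ B ∈ convexHull ℝ (Set.range (infoMat k d β)), B.det ≤ A.det) ↔
      (∀ x : Fin k → Bool,
        intensity k d β x *
          ((F⁻¹ᵀ *ᵥ regr k d x) ⬝ᵥ (ψinv *ᵥ (F⁻¹ᵀ *ᵥ regr k d x))) ≤ 1)) ∧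
    ((∀ x : Fin k → Bool,
        intensity k d β x *
          ((F⁻¹ᵀ *ᵥ regr k d x) ⬝ᵥ (ψinv *ᵥ (F⁻¹ᵀ *ᵥ regr k d x))) ≤ 1) →
      ((Fintype.card (MonIdx k d) : ℝ)⁻¹ • ∑ i, infoMat k d β (e i)) ∈
          convexHull ℝ (Set.range fun i => infoMat k d β (e i)) ∧
        ∀ B ∈ convexHull ℝ (Set.range (infoMat k d β)),
          B.det ≤ ((Fintype.card (MonIdx k d) : ℝ)⁻¹ • ∑ i, infoMat k d β (e i)).det) := by
  subst hψinv
  have hrow : ∀ i, F i = regr k d (e i) := fun i => by rw [hF]; rfl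
  set S := range (infoMat k d β)
  set A₀ := (Fintype.card (MonIdx k d) : ℝ)⁻¹ • ∑ i, infoMat k d β (e i)
  have hface : range (fun i => infoMat k d β (e i)) ⊆ S :=
    range_comp_subset_range e (infoMat k d β)
  have hA₀ : A₀ ∈ convexHull ℝ (range fun i => infoMat k d β (e i)) :=
    inv_card_smul_sum_mem_convexHull_range _
  have hA₀pos : A₀.PosDef := by
    rw [show A₀ = _ from inv_card_smul_sum_infoMat_eq hrow]
    exact posDef_transpose_mul_diagonal_mul hFunit fun i =>
      mul_pos (by simp [Fintype.card_pos]) (intensity_pos _)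
  have hcrit : (∀ x, intensity k d β x * ((F⁻¹ᵀ *ᵥ regr k d x) ⬝ᵥ
      (diagonal (fun i => (intensity k d β (e i))⁻¹) *ᵥ (F⁻¹ᵀ *ᵥ regr k d x))) ≤ 1) ↔
      ∀ M ∈ S, (A₀⁻¹ * M).trace ≤ Fintype.card (MonIdx k d) := by
    simp only [S, forall_mem_range, A₀, trace_inv_centroid_mul_infoMat hrow,
      mul_le_iff_le_one_right (Nat.cast_pos.2 Fintype.card_pos)]
  have hmax : (∀ M ∈ S, (A₀⁻¹ * M).trace ≤ Fintype.card (MonIdx k d)) →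
      IsMaxOn det (convexHull ℝ S) A₀ :=
    isMaxOn_det_convexHull_of_trace_inv_mul_le_card
      (by rintro _ ⟨x, rfl⟩; exact infoMat_posSemidef x) hA₀pos
  refine ⟨⟨?_, fun h => ⟨A₀, hA₀, isMaxOn_iff.1 (hmax (hcrit.1 h))⟩⟩,
    fun h => ⟨hA₀, isMaxOn_iff.1 (hmax (hcrit.1 h))⟩⟩
  rintro ⟨A, hA, hAmax⟩
  have hAS := convexHull_mono hface hA
  have hdet : 0 < A.det := hA₀pos.det_pos.trans_le (hAmax _ (convexHull_mono hface hA₀))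
  obtain ⟨w, hw, rfl⟩ := exists_mem_stdSimplex_of_mem_convexHull_range hA
  have hw₀ := eq_inv_card_of_trace_inv_mul_infoMat_le hrow hFunit hw hdet fun j =>
    trace_inv_mul_le_card_of_isMaxOn_det (isMaxOn_iff.2 hAmax) hAS hdet ⟨e j, rfl⟩
  refine hcrit.2 fun M hM => ?_
  rw [hw₀, ← Finset.smul_sum] at hAS hdet hAmax
  exact trace_inv_mul_le_card_of_isMaxOn_det (isMaxOn_iff.2 hAmax) hAS hdet hM

/-- **Kiefer–Wolfowitz equivalence theorem.**
Let `X ⊆ {0,1}^k` have size `p` (encoded by the injective enumeration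
`e : MonIdx k d → (Fin k → Bool)`, whose domain has cardinality `p`), such that the `p × p`
matrix `F` with rows `f(x)`, `x ∈ X`, is invertible, and let `β ∈ ℝ^p`.  Then there is a
matrix maximizing the determinant over `P(β) = conv {M(x,β) : x ∈ {0,1}^k}` lying in the face
`conv {M(x,β) : x ∈ X}` if and only if for all `x ∈ {0,1}^k`
`λ(x,β) · (F⁻ᵀ f(x))ᵀ ψ(β)⁻¹ (F⁻ᵀ f(x)) ≤ 1`, where `ψ(β)` is the diagonal matrix with
diagonal entries `λ(x,β)`, `x ∈ X` (in the order of the rows of `F`).  Moreover, if these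
inequalities hold, then the geometric center `(1/p) ∑_{x ∈ X} M(x,β)` of the face maximizes
the determinant over `P(β)`. -/
theorem kiefer_wolfowitz_saturated (k d : ℕ) (hk : 0 < k) (hd : 0 < d) (hdk : d ≤ k)
    (β : MonIdx k d → ℝ)
    (e : MonIdx k d → (Fin k → Bool)) (he : Function.Injective e)
    (F : Matrix (MonIdx k d) (MonIdx k d) ℝ)
    (hF : F = Matrix.of fun i j => regr k d (e i) j)
    (hFunit : IsUnit F.det)
    (ψinv : Matrix (MonIdx k d) (MonIdx k d) ℝ)
    (hψinv : ψinv = Matrix.diagonal fun i => (intensity k d β (e i))⁻¹) :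
    ((∃ A ∈ convexHull ℝ (Set.range fun i => infoMat k d β (e i)),
        ∀ B ∈ convexHull ℝ (Set.range (infoMat k d β)), B.det ≤ A.det) ↔
      (∀ x : Fin k → Bool,
        intensity k d β x *
          ((F⁻¹ᵀ *ᵥ regr k d x) ⬝ᵥ (ψinv *ᵥ (F⁻¹ᵀ *ᵥ regr k d x))) ≤ 1)) ∧
    ((∀ x : Fin k → Bool,
        intensity k d β x *
          ((F⁻¹ᵀ *ᵥ regr k d x) ⬝ᵥ (ψinv *ᵥ (F⁻¹ᵀ *ᵥ regr k d x))) ≤ 1) →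
      ((Fintype.card (MonIdx k d) : ℝ)⁻¹ • ∑ i, infoMat k d β (e i)) ∈
          convexHull ℝ (Set.range fun i => infoMat k d β (e i)) ∧
        ∀ B ∈ convexHull ℝ (Set.range (infoMat k d β)),
          B.det ≤ ((Fintype.card (MonIdx k d) : ℝ)⁻¹ • ∑ i, infoMat k d β (e i)).det) :=
  kiefer_wolfowitz_saturated_general k d β e F hF hFunit ψinv hψinv
end

section
/- Let X ⊆ {0,1}^k be a set of rule settings of size p such that the p×p matrix F whose rows are the vectors f(x), x ∈ X, is invertible, and let β ∈ ℝ^p. Then for every choice of nonnegative weights (w_x)_{x∈X} with Σ_{x∈X} w_x = 1 one has det(Σ_{x∈X} w_x M(x,β)) = det(F)² · ∏_{x∈X} (w_x λ(x,β)), and consequently the determinant function attains its maximum over the face conv{M(x,β) : x ∈ X} exactly at the geometric center (1/p) Σ_{x∈X} M(x,β), where the maximal value is p^{-p} det(F)² ∏_{x∈X} λ(x,β) > 0. -/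
open Matrix

/-!
Writing `F` for the matrix whose rows are the `f(x)`, the weighted information matrix factors as
`∑ w_x M(x,β) = Fᵀ · diag(w_x λ(x,β)) · F`, so its determinant is `det(F)² ∏ (w_x λ(x,β))`.
Only `∏ w_x` depends on the weights, and by AM-GM it is at most `p^{-p}` on the simplex, with
equality exactly at the barycenter.
-/

namespace Matrix

variable {ι n R : Type*} [Fintype ι]

theorem sum_smul_vecMulVec_eq_transpose_mul_diagonal_mul [CommSemiring R] [DecidableEq ι]
    (F : Matrix ι n R) (c : ι → R) :
    ∑ i, c i • vecMulVec (F i) (F i) = Fᵀ * diagonal c * F := by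
  ext a b
  rw [mul_apply]
  simp only [sum_apply, smul_apply, vecMulVec_apply, mul_diagonal, transpose_apply, smul_eq_mul]
  exact Finset.sum_congr rfl fun i _ => by ring

theorem det_sum_smul_vecMulVec [CommRing R] [DecidableEq ι] (F : Matrix ι ι R) (c : ι → R) :
    (∑ i, c i • vecMulVec (F i) (F i)).det = F.det ^ 2 * ∏ i, c i := by
  rw [sum_smul_vecMulVec_eq_transpose_mul_diagonal_mul, det_mul, det_mul, det_diagonal,
    det_transpose]
  ring

end Matrix

section AMGM

variable {ι : Type*} [Fintype ι] {w : ι → ℝ}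

theorem geomMean_pow_card (hw : ∀ i, 0 ≤ w i) :
    (∏ i, w i ^ (Fintype.card ι : ℝ)⁻¹) ^ Fintype.card ι = ∏ i, w i := by
  rw [← Finset.prod_pow]
  refine Finset.prod_congr rfl fun i _ => ?_
  have : Nonempty ι := ⟨i⟩
  have hn : (Fintype.card ι : ℝ) ≠ 0 := Nat.cast_ne_zero.mpr Fintype.card_ne_zero
  rw [← Real.rpow_natCast, ← Real.rpow_mul (hw i), inv_mul_cancel₀ hn, Real.rpow_one]

private theorem card_ne_zero_of_sum_eq_one (hw1 : ∑ i, w i = 1) : (Fintype.card ι : ℝ) ≠ 0 := by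
  obtain ⟨i, -, -⟩ := Finset.exists_ne_zero_of_sum_ne_zero (hw1 ▸ one_ne_zero)
  have : Nonempty ι := ⟨i⟩
  exact Nat.cast_ne_zero.mpr Fintype.card_ne_zero

variable (hw : ∀ i, 0 ≤ w i) (hw1 : ∑ i, w i = 1)
include hw hw1

/-- AM-GM for the uniform weights `1/n`, with respect to which the mean of `w` is `1/n`. -/
theorem geomMean_le_inv_card_and_eq_iff :
    ∏ i, w i ^ (Fintype.card ι : ℝ)⁻¹ ≤ (Fintype.card ι : ℝ)⁻¹ ∧
      (∏ i, w i ^ (Fintype.card ι : ℝ)⁻¹ = (Fintype.card ι : ℝ)⁻¹ ↔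
        ∀ j, w j = (Fintype.card ι : ℝ)⁻¹) := by
  have hn := card_ne_zero_of_sum_eq_one hw1
  have hweights : ∑ _i : ι, (Fintype.card ι : ℝ)⁻¹ = 1 := by
    rw [Finset.sum_const, Finset.card_univ, nsmul_eq_mul, mul_inv_cancel₀ hn]
  have hmean : ∑ i, (Fintype.card ι : ℝ)⁻¹ * w i = (Fintype.card ι : ℝ)⁻¹ := by
    rw [← Finset.mul_sum, hw1, mul_one]
  have hpos : ∀ i ∈ (Finset.univ : Finset ι), (0 : ℝ) < (Fintype.card ι : ℝ)⁻¹ :=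
    fun _ _ => by positivity
  have hle := Real.geom_mean_le_arith_mean_weighted _ _ _ (fun i hi => (hpos i hi).le) hweights
    fun i _ => hw i
  have heq := Real.geom_mean_eq_arith_mean_weighted_iff_of_pos' _ _ _ hpos hweights fun i _ => hw i
  rw [hmean] at hle heq
  exact ⟨hle, by simpa using heq⟩

theorem prod_le_inv_card_pow_of_sum_eq_one :
    ∏ i, w i ≤ ((Fintype.card ι : ℝ) ^ Fintype.card ι)⁻¹ := by
  rw [← geomMean_pow_card hw, ← inv_pow]
  exact pow_le_pow_left₀ (Finset.prod_nonneg fun i _ => Real.rpow_nonneg (hw i) _)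
    (geomMean_le_inv_card_and_eq_iff hw hw1).1 _

theorem prod_eq_inv_card_pow_iff_of_sum_eq_one :
    ∏ i, w i = ((Fintype.card ι : ℝ) ^ Fintype.card ι)⁻¹ ↔
      w = fun _ => (Fintype.card ι : ℝ)⁻¹ := by
  rw [← geomMean_pow_card hw, ← inv_pow, funext_iff, pow_left_inj₀
    (Finset.prod_nonneg fun i _ => Real.rpow_nonneg (hw i) _) (by positivity)
    (Nat.cast_ne_zero.mp (card_ne_zero_of_sum_eq_one hw1))]
  exact (geomMean_le_inv_card_and_eq_iff hw hw1).2

end AMGM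

theorem det_sum_smul_infoMat {k d : ℕ} (β : MonIdx k d → ℝ) (e : MonIdx k d → (Fin k → Bool))
    (w : MonIdx k d → ℝ) :
    (∑ i, w i • infoMat k d β (e i)).det
      = (of fun i j => regr k d (e i) j).det ^ 2 * ∏ i, (w i * intensity k d β (e i)) := by
  simp only [infoMat, smul_smul]
  exact det_sum_smul_vecMulVec (of fun i j => regr k d (e i) j) _

theorem det_on_saturated_face_general (k d : ℕ)
    (β : MonIdx k d → ℝ)
    (e : MonIdx k d → (Fin k → Bool))
    (F : Matrix (MonIdx k d) (MonIdx k d) ℝ)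
    (hF : F = Matrix.of fun i j => regr k d (e i) j)
    (hFunit : IsUnit F.det)
    (p : ℕ) (hp : p = Fintype.card (MonIdx k d))
    (maxval : ℝ)
    (hmax : maxval = ((p : ℝ) ^ p)⁻¹ * F.det ^ 2 * ∏ i, intensity k d β (e i))
    (w : MonIdx k d → ℝ) (hw : ∀ i, 0 ≤ w i) (hw1 : ∑ i, w i = 1) :
    (∑ i, w i • infoMat k d β (e i)).det
        = F.det ^ 2 * ∏ i, (w i * intensity k d β (e i)) ∧
    (∑ i, w i • infoMat k d β (e i)).det ≤ maxval ∧
    ((∑ i, w i • infoMat k d β (e i)).det = maxval ↔ w = fun _ => (p : ℝ)⁻¹) ∧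
    0 < maxval := by
  have hdet : (∑ i, w i • infoMat k d β (e i)).det
      = F.det ^ 2 * ∏ i, (w i * intensity k d β (e i)) := by
    rw [det_sum_smul_infoMat, hF]
  set C := F.det ^ 2 * ∏ i, intensity k d β (e i)
  have hC : 0 < C := mul_pos (even_two.pow_pos hFunit.ne_zero)
    (Finset.prod_pos fun i _ => Real.exp_pos _)
  have hdet_weights : (∑ i, w i • infoMat k d β (e i)).det = C * ∏ i, w i := by
    rw [hdet, Finset.prod_mul_distrib]
    ring
  replace hmax : maxval = C * ((p : ℝ) ^ p)⁻¹ := by rw [hmax]; ring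
  subst hp
  refine ⟨hdet, ?_, ?_, ?_⟩
  · rw [hdet_weights, hmax]
    exact mul_le_mul_of_nonneg_left (prod_le_inv_card_pow_of_sum_eq_one hw hw1) hC.le
  · rw [hdet_weights, hmax, mul_right_inj' hC.ne', prod_eq_inv_card_pow_iff_of_sum_eq_one hw hw1]
  · have := card_ne_zero_of_sum_eq_one hw1
    rw [hmax]
    positivity

/-- Let `X ⊆ {0,1}^k` have size `p` (encoded by the injective enumeration `e`, whose domain
has cardinality `p`), with the matrix `F` of rows `f(x)`, `x ∈ X`, invertible, and let
`β ∈ ℝ^p`.  For any nonnegative weights `(w_x)_{x∈X}` summing to `1`,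
`det (∑_{x∈X} w_x M(x,β)) = det(F)² ∏_{x∈X} (w_x λ(x,β))`; consequently the determinant
attains its maximum over the face `conv {M(x,β) : x ∈ X}` exactly at the geometric center
`(1/p) ∑_{x∈X} M(x,β)`, the maximal value being `p^{-p} det(F)² ∏_{x∈X} λ(x,β) > 0`. -/
theorem det_on_saturated_face (k d : ℕ) (hk : 0 < k) (hd : 0 < d) (hdk : d ≤ k)
    (β : MonIdx k d → ℝ)
    (e : MonIdx k d → (Fin k → Bool)) (he : Function.Injective e)
    (F : Matrix (MonIdx k d) (MonIdx k d) ℝ)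
    (hF : F = Matrix.of fun i j => regr k d (e i) j)
    (hFunit : IsUnit F.det)
    (p : ℕ) (hp : p = Fintype.card (MonIdx k d))
    (maxval : ℝ)
    (hmax : maxval = ((p : ℝ) ^ p)⁻¹ * F.det ^ 2 * ∏ i, intensity k d β (e i))
    (w : MonIdx k d → ℝ) (hw : ∀ i, 0 ≤ w i) (hw1 : ∑ i, w i = 1) :
    (∑ i, w i • infoMat k d β (e i)).det
        = F.det ^ 2 * ∏ i, (w i * intensity k d β (e i)) ∧
    (∑ i, w i • infoMat k d β (e i)).det ≤ maxval ∧
    ((∑ i, w i • infoMat k d β (e i)).det = maxval ↔ w = fun _ => (p : ℝ)⁻¹) ∧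
    0 < maxval :=
  det_on_saturated_face_general k d β e F hF hFunit p hp maxval hmax w hw hw1
end

section
/- For the corner design there always exist feasible parameters: there exists β ∈ ℝ^p such that for every x ∈ {0,1}^k one has λ(x,β) · (F⁻ᵀ f(x))ᵀ ψ(β)⁻¹ (F⁻ᵀ f(x)) ≤ 1, where F is the p×p matrix whose rows are the vectors f(y) for the p rule settings y ∈ {0,1}^k with Hamming weight |y|₁ ≤ d, and ψ(β) is the diagonal p×p matrix whose diagonal entries are the intensities λ(y,β) of these same rule settings (in the same order). In other words, there always exist parameters β at which the corner design is D-optimal. -/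
open Matrix

/-- The enumeration of the `p` rule settings of Hamming weight `≤ d` (the support of the
corner design): the subset `S` with `|S| ≤ d` corresponds to its indicator vector. -/
def cornerPt (k d : ℕ) (S : MonIdx k d) : Fin k → Bool := fun i => decide (i ∈ S.1)

/-!
Take `β` constant, equal to `-M`. Then `λ(x,β) = exp (-M N(x))`, where `N(x)` counts the subsets
of size `≤ d` of the support of `x`. At a corner point `f(x)` is a row of `F`, so `F⁻ᵀ f(x)` is a
unit vector and the left-hand side equals `1`. Off the corner, `N(x) > 2 ^ d ≥ N(y)` for every
corner point `y`, so each term of the quadratic form carries a factor `≤ exp (-M)`, which beats the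
`M`-independent size of `F⁻ᵀ f(x)` once `M` is large.
-/

open Finset

theorem Matrix.inv_transpose_mulVec_row_s4 {ι R : Type*} [Fintype ι] [DecidableEq ι] [CommRing R]
    {F : Matrix ι ι R} (hF : IsUnit F.det) (i : ι) : F⁻¹ᵀ *ᵥ F.row i = Pi.single i 1 := by
  have hrow : F.row i = Fᵀ *ᵥ Pi.single i 1 := (Fᵀ.mulVec_single_one i).symm
  rw [hrow, mulVec_mulVec, ← transpose_mul, mul_nonsing_inv F hF, transpose_one, one_mulVec]

theorem Matrix.dotProduct_diagonal_mulVec_self {ι R : Type*} [Fintype ι] [DecidableEq ι]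
    [CommSemiring R] (w v : ι → R) : v ⬝ᵥ (diagonal w *ᵥ v) = ∑ i, w i * v i ^ 2 := by
  simp only [dotProduct, mulVec_diagonal]
  exact sum_congr rfl fun i _ => by ring

section LowSubsets

variable {α : Type*}

def lowSubsetCount (d : ℕ) (A : Finset α) : ℕ := #{T ∈ A.powerset | #T ≤ d}

theorem lowSubsetCount_le_two_pow {d : ℕ} {B : Finset α} (hB : #B ≤ d) :
    lowSubsetCount d B ≤ 2 ^ d :=
  calc lowSubsetCount d B ≤ #B.powerset := card_filter_le _ _
    _ = 2 ^ #B := card_powerset B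
    _ ≤ 2 ^ d := Nat.pow_le_pow_right two_pos hB

-- A `d`-subset `A'` of `A` has `2 ^ d` subsets, and a singleton `{i}`, `i ∈ A \ A'`, is one more.
theorem two_pow_lt_lowSubsetCount {d : ℕ} (hd : 0 < d) {A : Finset α} (hA : d < #A) :
    2 ^ d < lowSubsetCount d A := by
  classical
  obtain ⟨A', hA'A, hA'⟩ := exists_subset_card_eq hA.le
  obtain ⟨i, hiA, hiA'⟩ := exists_of_ssubset (hA'A.ssubset_of_ne (by rintro rfl; omega))
  have hsub : insert {i} A'.powerset ⊆ {T ∈ A.powerset | #T ≤ d} := by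
    intro T hT
    simp only [mem_insert, mem_powerset, mem_filter] at hT ⊢
    rcases hT with rfl | hT
    · simpa using ⟨hiA, hd⟩
    · exact ⟨hT.trans hA'A, (card_le_card hT).trans hA'.le⟩
  calc 2 ^ d < #(insert {i} A'.powerset) := by
        rw [card_insert_of_notMem (by simpa using hiA'), card_powerset, hA']
        exact Nat.lt_succ_self _
    _ ≤ lowSubsetCount d A := card_le_card hsub

end LowSubsets

section RuleSettings

variable {k d : ℕ}

def ruleSupport (x : Fin k → Bool) : Finset (Fin k) := {i | x i}

theorem ruleSupport_cornerPt (S : MonIdx k d) : ruleSupport (cornerPt k d S) = S.1 := by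
  ext i; simp [ruleSupport, cornerPt]

theorem exists_cornerPt_eq {x : Fin k → Bool} (hx : #(ruleSupport x) ≤ d) :
    ∃ S, cornerPt k d S = x :=
  ⟨⟨ruleSupport x, hx⟩, funext fun i => by cases hi : x i <;> simp [cornerPt, ruleSupport, hi]⟩

theorem regr_eq_ite (x : Fin k → Bool) (S : MonIdx k d) :
    regr k d x S = if S.1 ⊆ ruleSupport x then 1 else 0 := by
  simp only [regr, ruleSupport, prod_ite_zero, prod_const_one, subset_iff, mem_filter, mem_univ,
    true_and]

theorem sum_regr (x : Fin k → Bool) :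
    ∑ S, regr k d x S = lowSubsetCount d (ruleSupport x) := by
  simp only [regr_eq_ite, sum_boole]
  rw [lowSubsetCount, ← card_subtype (fun T => #T ≤ d)]
  congr 2
  ext S
  simp

theorem intensity_const (M : ℝ) (x : Fin k → Bool) :
    intensity k d (fun _ => M) x = Real.exp (M * lowSubsetCount d (ruleSupport x)) := by
  rw [intensity, ← sum_mul, sum_regr, mul_comm]

end RuleSettings

section Sensitivity

variable {k d : ℕ}

/-- The left-hand side of the Kiefer–Wolfowitz inequality: the sensitivity function divided by `p`. -/
noncomputable def cornerSensitivity (F : Matrix (MonIdx k d) (MonIdx k d) ℝ)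
    (β : MonIdx k d → ℝ) (x : Fin k → Bool) : ℝ :=
  intensity k d β x *
    ((F⁻¹ᵀ *ᵥ regr k d x) ⬝ᵥ
      (diagonal (fun i => (intensity k d β (cornerPt k d i))⁻¹) *ᵥ (F⁻¹ᵀ *ᵥ regr k d x)))

-- If `F` is singular then `F⁻¹ = 0` and the sensitivity vanishes.
theorem cornerSensitivity_cornerPt_le_one {F : Matrix (MonIdx k d) (MonIdx k d) ℝ}
    (hF : F = Matrix.of fun i j => regr k d (cornerPt k d i) j) (β : MonIdx k d → ℝ)
    (S : MonIdx k d) : cornerSensitivity F β (cornerPt k d S) ≤ 1 := by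
  by_cases hdet : IsUnit F.det
  · have hrow : regr k d (cornerPt k d S) = F.row S := by rw [hF]; rfl
    rw [cornerSensitivity, hrow, inv_transpose_mulVec_row_s4 hdet, diagonal_mulVec_single,
      dotProduct_single, Pi.single_eq_same, mul_one, one_mul]
    exact (mul_inv_cancel₀ (Real.exp_ne_zero _)).le
  · simp [cornerSensitivity, nonsing_inv_apply_not_isUnit F hdet]

theorem cornerSensitivity_const_le {F : Matrix (MonIdx k d) (MonIdx k d) ℝ} (hd : 0 < d)
    {M : ℝ} (hM : 0 ≤ M) {x : Fin k → Bool} (hx : d < #(ruleSupport x)) :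
    cornerSensitivity F (fun _ => -M) x ≤ Real.exp (-M) * ∑ S, (F⁻¹ᵀ *ᵥ regr k d x) S ^ 2 := by
  rw [cornerSensitivity, dotProduct_diagonal_mulVec_self, mul_sum, mul_sum]
  refine sum_le_sum fun S _ => ?_
  have hcount : (lowSubsetCount d S.1 : ℝ) + 1 ≤ lowSubsetCount d (ruleSupport x) := by
    exact_mod_cast (lowSubsetCount_le_two_pow S.2).trans_lt (two_pow_lt_lowSubsetCount hd hx)
  rw [intensity_const, intensity_const, ruleSupport_cornerPt, ← Real.exp_neg, ← mul_assoc,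
    ← Real.exp_add]
  gcongr
  nlinarith

end Sensitivity

theorem corner_design_feasible_general (k d : ℕ) (hd : 0 < d)
    (F : Matrix (MonIdx k d) (MonIdx k d) ℝ)
    (hF : F = Matrix.of fun i j => regr k d (cornerPt k d i) j) :
    ∃ β : MonIdx k d → ℝ,
      ∀ x : Fin k → Bool,
        intensity k d β x *
          ((F⁻¹ᵀ *ᵥ regr k d x) ⬝ᵥ
            (Matrix.diagonal (fun i => (intensity k d β (cornerPt k d i))⁻¹) *ᵥ
              (F⁻¹ᵀ *ᵥ regr k d x))) ≤ 1 := by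
  set c : (Fin k → Bool) → ℝ := fun x => ∑ S, (F⁻¹ᵀ *ᵥ regr k d x) S ^ 2
  set M := ∑ x, c x
  have hc : ∀ x, 0 ≤ c x := fun x => sum_nonneg fun S _ => sq_nonneg _
  refine ⟨fun _ => -M, fun x => ?_⟩
  change cornerSensitivity F _ x ≤ 1
  by_cases hx : #(ruleSupport x) ≤ d
  · obtain ⟨S, rfl⟩ := exists_cornerPt_eq hx
    exact cornerSensitivity_cornerPt_le_one hF _ S
  · calc cornerSensitivity F (fun _ => -M) x ≤ Real.exp (-M) * c x :=
          cornerSensitivity_const_le hd (sum_nonneg fun x _ => hc x) (not_le.mp hx)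
      _ ≤ Real.exp (-M) * Real.exp M := by
          gcongr
          exact (single_le_sum (fun x _ => hc x) (mem_univ x)).trans
            ((le_add_of_nonneg_right zero_le_one).trans (Real.add_one_le_exp M))
      _ = 1 := by rw [← Real.exp_add, neg_add_cancel, Real.exp_zero]

/-- For the corner design there always exist feasible parameters: there is a `β ∈ ℝ^p` such
that for every `x ∈ {0,1}^k` one has `λ(x,β) · (F⁻ᵀ f(x))ᵀ ψ(β)⁻¹ (F⁻ᵀ f(x)) ≤ 1`, where
`F` is the `p × p` matrix of rows `f(y)` for the `p` rule settings `y` with `|y|₁ ≤ d`, and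
`ψ(β)` is the diagonal matrix with diagonal entries the intensities `λ(y,β)` of these rule
settings (in the same order).  By the Kiefer–Wolfowitz equivalence theorem, these are
exactly the parameters at which the corner design is D-optimal. -/
theorem corner_design_feasible (k d : ℕ) (hk : 0 < k) (hd : 0 < d) (hdk : d ≤ k)
    (F : Matrix (MonIdx k d) (MonIdx k d) ℝ)
    (hF : F = Matrix.of fun i j => regr k d (cornerPt k d i) j) :
    ∃ β : MonIdx k d → ℝ,
      ∀ x : Fin k → Bool,
        intensity k d β x *
          ((F⁻¹ᵀ *ᵥ regr k d x) ⬝ᵥ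
            (Matrix.diagonal (fun i => (intensity k d β (cornerPt k d i))⁻¹) *ᵥ
              (F⁻¹ᵀ *ᵥ regr k d x))) ≤ 1 :=
  corner_design_feasible_general k d hd F hF
end

section
/- There exist no real numbers μ₁, μ₂, μ₃, μ₄ with μ₁ > 0, μ₂ > 0, μ₃ > 0, μ₄ > 0 and μ₃ = μ₄ satisfying simultaneously the eleven inequalities: (1) 4μ₁μ₂μ₃μ₄ + μ₁μ₃ + μ₁μ₂ + 4μ₂μ₃ + μ₄ − 9μ₂μ₃μ₄ ≤ 0; (2) 4μ₁μ₂μ₃μ₄ + μ₂μ₃ + μ₁μ₂ + 4μ₁μ₃ + μ₄ − 9μ₁μ₃μ₄ ≤ 0; (3) 4μ₁μ₂μ₃μ₄ + μ₂μ₃ + μ₁μ₃ + 4μ₁μ₂ + μ₄ − 9μ₁μ₂μ₄ ≤ 0; (4) μ₁μ₂μ₃μ₄ + μ₂μ₃ + μ₁μ₃ + μ₁μ₂ + μ₄ − 9μ₁μ₂μ₃ ≤ 0; (5) μ₁μ₂μ₃μ₄ + μ₁μ₃ + μ₂μ₃ + 4μ₁μ₂ + 4μ₄ − 9μ₃μ₄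 ≤ 0; (6) μ₁μ₂μ₃μ₄ + μ₁μ₂ + 4μ₁μ₃ + μ₂μ₃ + 4μ₄ − 9μ₂μ₄ ≤ 0; (7) μ₁μ₂μ₃μ₄ + μ₁μ₂ + 4μ₂μ₃ + μ₁μ₃ + 4μ₄ − 9μ₁μ₄ ≤ 0; (8) μ₁μ₂μ₃μ₄ + 4μ₁μ₃ + 4μ₂μ₃ + μ₁μ₂ + μ₄ − 9μ₃ ≤ 0; (9) μ₁μ₂μ₃μ₄ + 4μ₁μ₂ + μ₁μ₃ + 4μ₂μ₃ + μ₄ − 9μ₂ ≤ 0; (10) μ₁μ₂μ₃μ₄ + 4μ₁μ₂ + μ₂μ₃ + 4μ₁μ₃ + μ₄ − 9μ₁ ≤ 0; (11) 4μ₁μ₂μ₃μ₄ + μ₁μ₂ + μ₁μ₃ + μ₂μ₃ + 4μ₄ − 9 ≤ 0. -/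
/-!
Inequalities (6), (7) and (8) alone are already contradictory on the diagonal: the sum of their
left-hand sides is `3 μ₁ μ₂ (μ₃ μ₄ + 1) + 9 (μ₁ + μ₂ - 1) (μ₃ - μ₄)`, which at `μ₃ = μ₄` is
`3 μ₁ μ₂ (μ₃² + 1) > 0`.
-/

lemma sum_lhs_six_seven_eight (a b c d : ℝ) :
    (a*b*c*d + a*b + 4*a*c + b*c + 4*d - 9*b*d) +
      (a*b*c*d + a*b + 4*b*c + a*c + 4*d - 9*a*d) +
      (a*b*c*d + 4*a*c + 4*b*c + a*b + d - 9*c) =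
    3*a*b*(c*d + 1) + 9*(a + b - 1)*(c - d) := by
  ring

/-- Infeasibility of the benchmark inequality system on the diagonal slice `μ₃ = μ₄`:
there are no positive reals `μ₁, μ₂, μ₃, μ₄` with `μ₃ = μ₄` satisfying simultaneously the
eleven polynomial inequalities arising (via the Kiefer–Wolfowitz equivalence theorem) from
a particular saturated design for the Rasch Poisson counts model with `k = 4` rules and
interaction order `d = 1`. -/
theorem benchmark_system_infeasible_on_diagonal :
    ¬ ∃ μ₁ μ₂ μ₃ μ₄ : ℝ,
      0 < μ₁ ∧ 0 < μ₂ ∧ 0 < μ₃ ∧ 0 < μ₄ ∧ μ₃ = μ₄ ∧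
      4*μ₁*μ₂*μ₃*μ₄ + μ₁*μ₃ + μ₁*μ₂ + 4*μ₂*μ₃ + μ₄ - 9*μ₂*μ₃*μ₄ ≤ 0 ∧
      4*μ₁*μ₂*μ₃*μ₄ + μ₂*μ₃ + μ₁*μ₂ + 4*μ₁*μ₃ + μ₄ - 9*μ₁*μ₃*μ₄ ≤ 0 ∧
      4*μ₁*μ₂*μ₃*μ₄ + μ₂*μ₃ + μ₁*μ₃ + 4*μ₁*μ₂ + μ₄ - 9*μ₁*μ₂*μ₄ ≤ 0 ∧
      μ₁*μ₂*μ₃*μ₄ + μ₂*μ₃ + μ₁*μ₃ + μ₁*μ₂ + μ₄ - 9*μ₁*μ₂*μ₃ ≤ 0 ∧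
      μ₁*μ₂*μ₃*μ₄ + μ₁*μ₃ + μ₂*μ₃ + 4*μ₁*μ₂ + 4*μ₄ - 9*μ₃*μ₄ ≤ 0 ∧
      μ₁*μ₂*μ₃*μ₄ + μ₁*μ₂ + 4*μ₁*μ₃ + μ₂*μ₃ + 4*μ₄ - 9*μ₂*μ₄ ≤ 0 ∧
      μ₁*μ₂*μ₃*μ₄ + μ₁*μ₂ + 4*μ₂*μ₃ + μ₁*μ₃ + 4*μ₄ - 9*μ₁*μ₄ ≤ 0 ∧
      μ₁*μ₂*μ₃*μ₄ + 4*μ₁*μ₃ + 4*μ₂*μ₃ + μ₁*μ₂ + μ₄ - 9*μ₃ ≤ 0 ∧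
      μ₁*μ₂*μ₃*μ₄ + 4*μ₁*μ₂ + μ₁*μ₃ + 4*μ₂*μ₃ + μ₄ - 9*μ₂ ≤ 0 ∧
      μ₁*μ₂*μ₃*μ₄ + 4*μ₁*μ₂ + μ₂*μ₃ + 4*μ₁*μ₃ + μ₄ - 9*μ₁ ≤ 0 ∧
      4*μ₁*μ₂*μ₃*μ₄ + μ₁*μ₂ + μ₁*μ₃ + μ₂*μ₃ + 4*μ₄ - 9 ≤ 0 := by
  rintro ⟨μ₁, μ₂, μ₃, μ₄, hμ₁, hμ₂, -, -, hdiag, -, -, -, -, -, h₆, h₇, h₈, -, -, -⟩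
  subst hdiag
  have hsum_pos : 0 < 3*μ₁*μ₂*(μ₃^2 + 1) := by positivity
  linarith [sum_lhs_six_seven_eight μ₁ μ₂ μ₃ μ₃]
end
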